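/- arXiv:2509.20880 — 6 statements merged into one kernel-verified Lean document; each statement's English description precedes it below -/
import Mathlib

section
/- Suppose k ≥ 1 and mk > n. Then θ_{m,k} is the zero map, i.e., θ_{m,k}(x) = 0 for every x ∈ F_2^n. -/
/-!
The index `j₀ = mk − n` occurs in the product defining `θ_{m,k}(x)_i`: it lies in `[1, mk)`
because `n < mk`, and `m ∤ j₀` because `m ∣ mk` and `m ∤ n`. Since `i + j₀ ≡ i + mk (mod n)`,
the product contains the factor `x_{i+mk} + 1`, and `a (a + 1) = 0` for every `a ∈ F_2`.
-/

/-- Index `i + j` computed modulo `n`, for `i : Fin n` and `j : ℕ`. -/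
def idx {n : ℕ} (i : Fin n) (j : ℕ) : Fin n :=
  ⟨(i.val + j) % n, Nat.mod_lt _ i.pos⟩

/-- The map `θ_{m,k} : F_2^n → F_2^n`; `θ_{m,0}` is the identity map, and for `k ≥ 1`,
`(θ_{m,k}(x))_i = x_{i+mk} · ∏_{1 ≤ j ≤ mk−1, m ∤ j} (x_{i+j} + 1)` (indices mod `n`). -/
def theta (n m k : ℕ) : (Fin n → ZMod 2) → Fin n → ZMod 2 :=
  if k = 0 then id
  else fun x i =>
    x (idx i (m * k)) *
      ∏ j ∈ (Finset.Ico 1 (m * k)).filter (fun j => ¬ m ∣ j), (x (idx i j) + 1)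

theorem idx_add_self {n : ℕ} (i : Fin n) (j : ℕ) : idx i (j + n) = idx i j := by
  simp only [idx, ← add_assoc, Nat.add_mod_right]

theorem ZMod.mul_self_add_one_eq_zero_two (a : ZMod 2) : a * (a + 1) = 0 := by
  fin_cases a <;> rfl

theorem ZMod.mul_prod_add_one_eq_zero_two {ι : Type*} {s : Finset ι} {f : ι → ZMod 2} {j : ι}
    (hj : j ∈ s) : f j * ∏ i ∈ s, (f i + 1) = 0 := by
  obtain ⟨c, hc⟩ := Finset.dvd_prod_of_mem (fun i => f i + 1) hj
  rw [hc, ← mul_assoc, ZMod.mul_self_add_one_eq_zero_two, zero_mul]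

theorem sub_mem_filter_not_dvd {n m k : ℕ} (hmn : ¬ m ∣ n) (hgt : n < m * k) :
    m * k - n ∈ (Finset.Ico 1 (m * k)).filter (fun j => ¬ m ∣ j) := by
  have hn : n ≠ 0 := by rintro rfl; exact hmn (dvd_zero m)
  refine Finset.mem_filter.mpr ⟨Finset.mem_Ico.mpr ⟨by omega, by omega⟩, fun hdvd => hmn ?_⟩
  simpa [Nat.sub_sub_self hgt.le] using Nat.dvd_sub (dvd_mul_right m k) hdvd

theorem stmt0_general (n m k : ℕ) (hmn : ¬ m ∣ n) (hgt : m * k > n) :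
    ∀ x : Fin n → ZMod 2, theta n m k x = 0 := by
  intro x
  funext i
  have hk : k ≠ 0 := by rintro rfl; omega
  have hidx : idx i (m * k) = idx i (m * k - n) := by
    simpa only [Nat.sub_add_cancel hgt.le] using idx_add_self i (m * k - n)
  simp only [theta, if_neg hk, Pi.zero_apply, hidx]
  exact ZMod.mul_prod_add_one_eq_zero_two (f := fun j => x (idx i j))
    (sub_mem_filter_not_dvd hmn hgt)

theorem stmt0 (n m k : ℕ) (hn : 1 ≤ n) (hm : 2 ≤ m) (hmn : ¬ m ∣ n)
    (hk : 1 ≤ k) (hgt : m * k > n) :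
    ∀ x : Fin n → ZMod 2, theta n m k x = 0 :=
  stmt0_general n m k hmn hgt
end

section
/- For every k with 1 ≤ k ≤ ℓ, the algebraic degree of θ_{m,k} equals (m−1)k + 1. -/
/-- The algebraic degree of a Boolean function: the least `d` such that the function is the
evaluation of a multivariate polynomial over `F_2` of total degree at most `d`. -/
noncomputable def algDeg {N : ℕ} (h : (Fin N → ZMod 2) → ZMod 2) : ℕ :=
  sInf {d | ∃ p : MvPolynomial (Fin N) (ZMod 2),
    p.totalDegree ≤ d ∧ ∀ x, MvPolynomial.eval x p = h x}

/-- The algebraic degree of a vectorial map: the maximum of the algebraic degrees of its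
coordinate functions. -/
noncomputable def mapDeg {N : ℕ} (F : (Fin N → ZMod 2) → Fin N → ZMod 2) : ℕ :=
  Finset.univ.sup fun i => algDeg fun x => F x i

open Finset MvPolynomial

section CubeSum

variable {σ R : Type*} [CommRing R] [CharP R 2]

theorem sum_powerset_eq_zero_of_insert_eq [DecidableEq σ] {S : Finset σ} {s : σ} (hs : s ∈ S)
    {f : Finset σ → R} (hf : ∀ T ⊆ S.erase s, f (insert s T) = f T) :
    ∑ T ∈ S.powerset, f T = 0 := by
  rw [← insert_erase hs, sum_powerset_insert (notMem_erase s S),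
    sum_congr rfl fun T hT => hf T (mem_powerset.mp hT), CharTwo.add_self_eq_zero]

theorem sum_powerset_eval_indicator_eq_zero {S : Finset σ} {p : MvPolynomial σ R}
    (hp : p.totalDegree < #S) :
    ∑ T ∈ S.powerset, eval ((T : Set σ).indicator 1) p = 0 := by
  classical
  simp only [eval_eq]
  rw [sum_comm]
  refine sum_eq_zero fun α hα => ?_
  have hcard : #α.support < #S := calc
    #α.support ≤ α.sum fun _ e => e := by
      simpa [Finsupp.sum] using card_nsmul_le_sum α.support α 1 fun i hi =>
        Nat.one_le_iff_ne_zero.mpr (Finsupp.mem_support_iff.mp hi)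
    _ ≤ p.totalDegree := le_totalDegree hα
    _ < #S := hp
  obtain ⟨s, hsS, hsα⟩ := exists_mem_notMem_of_card_lt_card hcard
  rw [← mul_sum]
  refine mul_eq_zero_of_right _ (sum_powerset_eq_zero_of_insert_eq hsS fun T _ => ?_)
  refine prod_congr rfl fun i hi => ?_
  have : i ≠ s := ne_of_mem_of_not_mem hi hsα
  simp [Set.indicator_apply, this]

theorem sum_powerset_prod_indicator_add_one (B : Finset σ) :
    ∑ T ∈ B.powerset, ∏ b ∈ B, ((T : Set σ).indicator (1 : σ → R) b + 1) = 1 := by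
  rw [sum_eq_single_of_mem ∅ (empty_mem_powerset B)]
  · simp
  · intro T hT hTne
    obtain ⟨b, hb⟩ := nonempty_iff_ne_empty.mpr hTne
    refine prod_eq_zero (mem_powerset.mp hT hb) ?_
    simp [Set.indicator_of_mem (mem_coe.mpr hb), CharTwo.add_self_eq_zero]

theorem sum_powerset_insert_indicator_mul_prod [DecidableEq σ] {a : σ} {B : Finset σ}
    (ha : a ∉ B) :
    ∑ T ∈ (insert a B).powerset,
      (T : Set σ).indicator (1 : σ → R) a * ∏ b ∈ B, ((T : Set σ).indicator 1 b + 1) = 1 := by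
  have hinsert : ∀ T : Finset σ, ∀ b ∈ B,
      ((insert a T : Finset σ) : Set σ).indicator (1 : σ → R) b = (T : Set σ).indicator 1 b :=
    fun T b hb => by simp [Set.indicator_apply, ne_of_mem_of_not_mem hb ha]
  rw [sum_powerset_insert ha, sum_eq_zero fun T hT => ?_, zero_add]
  · refine (sum_congr rfl fun T _ => ?_).trans (sum_powerset_prod_indicator_add_one B)
    rw [Set.indicator_of_mem (mem_coe.mpr (mem_insert_self a T)), Pi.one_apply, one_mul]
    exact prod_congr rfl fun b hb => by rw [hinsert T b hb]
  · rw [Set.indicator_of_notMem (fun h => ha (mem_powerset.mp hT h)), zero_mul]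

end CubeSum

section AlgDeg

variable {N : ℕ}

theorem algDeg_le_totalDegree {h : (Fin N → ZMod 2) → ZMod 2}
    {p : MvPolynomial (Fin N) (ZMod 2)} (hp : ∀ x, eval x p = h x) :
    algDeg h ≤ p.totalDegree :=
  Nat.sInf_le ⟨p, le_rfl, hp⟩

theorem exists_totalDegree_le_algDeg (h : (Fin N → ZMod 2) → ZMod 2) :
    ∃ p : MvPolynomial (Fin N) (ZMod 2), p.totalDegree ≤ algDeg h ∧ ∀ x, eval x p = h x := by
  obtain ⟨p, -, hp⟩ := Submodule.mem_map.mp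
    ((map_restrict_dom_evalₗ (ZMod 2) (Fin N)).ge (Submodule.mem_top (x := h)))
  exact Nat.sInf_mem (s := {d | ∃ p : MvPolynomial (Fin N) (ZMod 2),
    p.totalDegree ≤ d ∧ ∀ x, eval x p = h x}) ⟨_, p, le_rfl, congrFun hp⟩

theorem card_le_algDeg_of_sum_powerset_ne_zero {h : (Fin N → ZMod 2) → ZMod 2}
    {S : Finset (Fin N)} (hS : ∑ T ∈ S.powerset, h ((T : Set (Fin N)).indicator 1) ≠ 0) :
    #S ≤ algDeg h := by
  obtain ⟨p, hpdeg, hp⟩ := exists_totalDegree_le_algDeg h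
  by_contra! hlt
  exact hS (by simpa only [hp] using sum_powerset_eval_indicator_eq_zero (hpdeg.trans_lt hlt))

theorem algDeg_mul_prod_add_one {a : Fin N} {B : Finset (Fin N)} (ha : a ∉ B) :
    algDeg (fun x => x a * ∏ b ∈ B, (x b + 1)) = #B + 1 := by
  refine le_antisymm ?_ ?_
  · calc algDeg _ ≤ (X a * ∏ b ∈ B, (X b + 1) : MvPolynomial (Fin N) (ZMod 2)).totalDegree :=
          algDeg_le_totalDegree (by simp)
      _ ≤ 1 + ∑ _b ∈ B, 1 := by
          refine (totalDegree_mul _ _).trans (add_le_add (totalDegree_X a).le ?_)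
          refine (totalDegree_finsetProd _ _).trans (sum_le_sum fun b _ => ?_)
          exact (totalDegree_add _ _).trans (by simp)
      _ = #B + 1 := by rw [sum_const, smul_eq_mul, mul_one, add_comm]
  · rw [← card_insert_of_notMem ha]
    refine card_le_algDeg_of_sum_powerset_ne_zero ?_
    rw [sum_powerset_insert_indicator_mul_prod ha]
    exact one_ne_zero

end AlgDeg

section Theta

theorem idx_injOn {n : ℕ} (i : Fin n) : Set.InjOn (idx i) (Set.Iio n) := by
  intro j₁ h₁ j₂ h₂ h
  have := Nat.ModEq.add_left_cancel' i.val (congrArg Fin.val h)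
  rwa [Nat.ModEq, Nat.mod_eq_of_lt h₁, Nat.mod_eq_of_lt h₂] at this

theorem card_filter_not_dvd_Ico_one_mul (m k : ℕ) :
    #{j ∈ Ico 1 (m * k) | ¬ m ∣ j} = (m - 1) * k := by
  have hIoc : {j ∈ Ico 1 (m * k) | ¬ m ∣ j} = {j ∈ Ioc 0 (m * k) | ¬ m ∣ j} := by
    ext j
    simp only [mem_filter, mem_Ico, mem_Ioc]
    constructor
    · rintro ⟨⟨h1, h2⟩, h⟩
      exact ⟨⟨h1, h2.le⟩, h⟩
    · rintro ⟨⟨h1, h2⟩, h⟩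
      exact ⟨⟨h1, h2.lt_of_ne (by rintro rfl; exact h (dvd_mul_right m k))⟩, h⟩
  rw [hIoc, filter_not, card_sdiff_of_subset (filter_subset _ _),
    Nat.Ioc_filter_dvd_card_eq_div, Nat.card_Ioc, Nat.sub_zero, Nat.sub_one_mul]
  rcases m.eq_zero_or_pos with rfl | hm
  · simp
  · rw [Nat.mul_div_cancel_left k hm]

variable {n m k : ℕ}

theorem theta_apply_eq_mul_prod (hk : k ≠ 0) (hmkn : m * k < n) (x : Fin n → ZMod 2)
    (i : Fin n) :
    theta n m k x i =
      x (idx i (m * k)) * ∏ b ∈ {j ∈ Ico 1 (m * k) | ¬ m ∣ j}.image (idx i), (x b + 1) := by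
  rw [theta, if_neg hk, prod_image ((idx_injOn i).mono fun j hj => ?_)]
  simp only [coe_filter, mem_Ico] at hj
  exact hj.1.2.trans hmkn

theorem algDeg_theta_apply (hk : k ≠ 0) (hmkn : m * k < n) (i : Fin n) :
    algDeg (fun x => theta n m k x i) = (m - 1) * k + 1 := by
  have hlt : ∀ j ∈ {j ∈ Ico 1 (m * k) | ¬ m ∣ j}, j < m * k := fun j hj =>
    (mem_Ico.mp (mem_filter.mp hj).1).2
  have hinj : Set.InjOn (idx i) ↑{j ∈ Ico 1 (m * k) | ¬ m ∣ j} :=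
    (idx_injOn i).mono fun j hj => (hlt j hj).trans hmkn
  have hlast : idx i (m * k) ∉ {j ∈ Ico 1 (m * k) | ¬ m ∣ j}.image (idx i) := by
    rw [mem_image]
    rintro ⟨j, hj, hidx⟩
    exact (hlt j hj).ne (idx_injOn i ((hlt j hj).trans hmkn) hmkn hidx)
  simp only [theta_apply_eq_mul_prod hk hmkn]
  rw [algDeg_mul_prod_add_one hlast, card_image_of_injOn hinj, card_filter_not_dvd_Ico_one_mul]

end Theta

theorem stmt2_general (n m k : ℕ) (hmn : ¬ m ∣ n) (hk1 : 1 ≤ k) (hk2 : k ≤ n / m) :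
    mapDeg (theta n m k) = (m - 1) * k + 1 := by
  have hmkn : m * k < n :=
    ((Nat.mul_le_mul_left m hk2).trans (Nat.mul_div_le n m)).lt_of_ne
      fun h => hmn ⟨k, h.symm⟩
  have : Nonempty (Fin n) := ⟨⟨0, (Nat.zero_le _).trans_lt hmkn⟩⟩
  simp only [mapDeg, algDeg_theta_apply (Nat.one_le_iff_ne_zero.mp hk1) hmkn,
    sup_const univ_nonempty]

theorem stmt2 (n m k : ℕ) (hn : 1 ≤ n) (hm : 2 ≤ m) (hmn : ¬ m ∣ n)
    (hk1 : 1 ≤ k) (hk2 : k ≤ n / m) :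
    mapDeg (theta n m k) = (m - 1) * k + 1 :=
  stmt2_general n m k hmn hk1 hk2
end

section
/- The maps θ_{m,0}, θ_{m,1}, …, θ_{m,ℓ} are linearly independent over F_2 in the F_2-vector space of all maps F_2^n → F_2^n with pointwise addition; consequently the set Θ_{n,m} of all F_2-linear combinations Σ_{k=0}^{ℓ} a_k θ_{m,k} is an F_2-vector space of dimension ℓ + 1. -/
/-!
Test `θ_{m,k}` on the unit vector `e_{mt}` and read off coordinate `0`. For `k ≥ 1` every index
`j < mk` in the product is not a multiple of `m`, so it differs from `mt` and its factor is `1`; what is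
left is `(e_{mt})_{mk} = δ_{kt}`, also for `k = 0`. Since `m ℓ < n` when `m ∤ n`, all indices
involved for `k, t ≤ ℓ` stay below `n`, and the evaluations `x ↦ x(e_{mt})_0` form a family of
linear functionals biorthogonal to `θ_{m,0}, …, θ_{m,ℓ}`.
-/

theorem linearIndependent_of_biorthogonal {ι R M : Type*} [Fintype ι] [DecidableEq ι]
    [Semiring R] [AddCommMonoid M] [Module R M] (v : ι → M) (f : ι → M →ₗ[R] R)
    (h : ∀ i j, f j (v i) = if i = j then 1 else 0) : LinearIndependent R v := by
  rw [Fintype.linearIndependent_iffₛ]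
  intro a b hab j
  simpa [map_sum, h] using congrArg (f j) hab

/-- The unit vector `e_a`; it is the zero vector when `a ≥ n`. -/
def unitVec (n a : ℕ) : Fin n → ZMod 2 := fun j => if (j : ℕ) = a then 1 else 0

lemma idx_zero_val {n j : ℕ} (hn : 1 ≤ n) (hj : j < n) : (idx (⟨0, hn⟩ : Fin n) j : ℕ) = j := by
  simp [idx, Nat.mod_eq_of_lt hj]

lemma theta_unitVec_mul_apply_zero {n m k t : ℕ} (hn : 1 ≤ n) (hm : 0 < m) (hk : m * k < n) :
    theta n m k (unitVec n (m * t)) ⟨0, hn⟩ = if k = t then 1 else 0 := by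
  rcases Nat.eq_zero_or_pos k with rfl | hk0
  · simp [theta, unitVec, eq_comm (a := 0), hm.ne']
  have hprod : ∏ j ∈ (Finset.Ico 1 (m * k)).filter (fun j => ¬ m ∣ j),
      (unitVec n (m * t) (idx ⟨0, hn⟩ j) + 1) = 1 := by
    refine Finset.prod_eq_one fun j hj => ?_
    simp only [Finset.mem_filter, Finset.mem_Ico] at hj
    have hj_ne : j ≠ m * t := fun h => hj.2 ⟨t, h⟩
    simp [unitVec, idx_zero_val hn (by omega : j < n), hj_ne]
  rw [theta, if_neg hk0.ne', hprod, mul_one]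
  simp [unitVec, idx_zero_val hn hk, hm.ne']

theorem stmt3 (n m : ℕ) (hn : 1 ≤ n) (hm : 2 ≤ m) (hmn : ¬ m ∣ n) :
    LinearIndependent (ZMod 2) (fun k : Fin (n / m + 1) => theta n m k) ∧
    Module.finrank (ZMod 2)
      (Submodule.span (ZMod 2)
        (Set.range (fun k : Fin (n / m + 1) => theta n m k))) = n / m + 1 := by
  have hℓ : m * (n / m) < n := Nat.mul_div_lt_iff_not_dvd.2 hmn
  let eval (t : Fin (n / m + 1)) : ((Fin n → ZMod 2) → Fin n → ZMod 2) →ₗ[ZMod 2] ZMod 2 :=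
    LinearMap.proj ⟨0, hn⟩ ∘ₗ LinearMap.proj (unitVec n (m * t))
  have hli : LinearIndependent (ZMod 2) (fun k : Fin (n / m + 1) => theta n m k) := by
    refine linearIndependent_of_biorthogonal _ eval fun k t => ?_
    have hk : m * k < n := lt_of_le_of_lt (Nat.mul_le_mul_left m (Nat.lt_succ_iff.1 k.isLt)) hℓ
    simpa [eval, Fin.val_inj] using theta_unitVec_mul_apply_zero hn (by omega) hk (t := t)
  exact ⟨hli, by rw [finrank_span_eq_card hli, Fintype.card_fin]⟩
end

section
/- G_{n,m} under composition forms an abelian group, and the map φ sending θ_{m,0} + Σ_{k=1}^{ℓ} a_k θ_{m,k} to the residue class of 1 + Σ_{k=1}^{ℓ} a_k z^k in F_2[z]/(z^{ℓ+1}) is a group isomorphism from (G_{n,m}, ∘) onto the unit group (F_2[z]/(z^{ℓ+1}))^*; in particular φ(f ∘ g) = φ(f)·φ(g) for all f, g ∈ G_{n,m}, and φ is a bijection from G_{n,m} onto the unit group. -/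
/-- The set `G_{n,m}` of maps `θ_{m,0} + Σ_{k=1}^{⌊n/m⌋} a_k • θ_{m,k}` with `a_k ∈ F_2`. -/
def Gset (n m : ℕ) : Set ((Fin n → ZMod 2) → Fin n → ZMod 2) :=
  { F | ∃ a : ℕ → ZMod 2,
      F = theta n m 0 + ∑ k ∈ Finset.Icc 1 (n / m), a k • theta n m k }

/-
Write `Ψ(∑ c_k z^k) = ∑ c_k θ_{m,k}`. At a coordinate, `θ_{m,k}` is the indicator of a run: a `1` at
offset `mk` and `0` at the offsets in between that are not multiples of `m`. A run starting at an
offset not divisible by `m` always clashes with a run ending at a multiple of `m`, so expanding the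
product over the run of `θ_{m,j} ∘ Ψ(q)` leaves exactly `Ψ(z^j q)` whenever `q(0) = 1`; by linearity
`Ψ(p q) = Ψ(p) ∘ Ψ(q)`. Since `m ∤ n`, a run of length `mk > n` wraps around and clashes with
itself, so `θ_{m,k} = 0` for `k > ℓ`, while evaluating at the unit vector at coordinate `md` reads
off the coefficient of `z^d` for `d ≤ ℓ`. Hence `Ψ` identifies `F_2[z]/(z^{ℓ+1})` with the span of
the `θ_{m,k}`, its units (the classes with constant term `1`) with `G_{n,m}`, and products with
composition.
-/

open Finset Polynomial

namespace ThetaGroup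

lemma mul_add_one_self (u : ZMod 2) : u * (u + 1) = 0 := by revert u; decide

section Sequence

variable (m : ℕ) (v : ℕ → ZMod 2)

/-- Equals `1` iff `v` vanishes at every `t ∈ [a, c)` with `m ∤ t`, and `0` otherwise. -/
def gapProd (a c : ℕ) : ZMod 2 := ∏ t ∈ Ico a c, if m ∣ t then 1 else v t + 1

def seqTheta (k : ℕ) : ZMod 2 := v (m * k) * gapProd m v 0 (m * k)

variable {m v}

lemma gapProd_self (a : ℕ) : gapProd m v a a = 1 := by
  rw [gapProd, Ico_self, prod_empty]

lemma gapProd_eq_mul {a c : ℕ} (h : a < c) :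
    gapProd m v a c = (if m ∣ a then 1 else v a + 1) * gapProd m v (a + 1) c :=
  prod_eq_prod_Ico_succ_bot h _

lemma gapProd_succ_of_dvd {a : ℕ} (c : ℕ) (h : m ∣ a) :
    gapProd m v a c = gapProd m v (a + 1) c := by
  rcases lt_or_ge a c with hac | hca
  · rw [gapProd_eq_mul hac, if_pos h, one_mul]
  · rw [gapProd, gapProd, Ico_eq_empty_of_le hca, Ico_eq_empty_of_le (by omega)]

lemma mul_gapProd_eq_zero {a c t : ℕ} (hat : a ≤ t) (htc : t < c) (ht : ¬ m ∣ t) :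
    v t * gapProd m v a c = 0 := by
  obtain ⟨r, hr⟩ := dvd_prod_of_mem (fun t => if m ∣ t then (1 : ZMod 2) else v t + 1)
    (mem_Ico.mpr ⟨hat, htc⟩)
  rw [gapProd, hr, if_neg ht, ← mul_assoc, mul_add_one_self, zero_mul]

lemma gapProd_shift {s : ℕ} (hs : m ∣ s) (a c : ℕ) :
    gapProd m (fun t => v (s + t)) a c = gapProd m v (a + s) (c + s) := by
  rw [gapProd, gapProd, ← prod_Ico_add]
  refine prod_congr rfl fun t _ => ?_
  simp only [Nat.dvd_add_right hs]

lemma seqTheta_shift {s : ℕ} (hs : m ∣ s) (k : ℕ) :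
    seqTheta m (fun t => v (s + t)) k = v (s + m * k) * gapProd m v s (s + m * k) := by
  rw [seqTheta, gapProd_shift hs, zero_add, add_comm (m * k)]

lemma seqTheta_zero : seqTheta m v 0 = v 0 := by
  rw [seqTheta, mul_zero, gapProd_self, mul_one]

/-- The run of `θ_{m,k}` starting at `s` and the run ending at `c` overlap at a position not
divisible by `m` where one demands `1` and the other `0`. -/
lemma mul_gapProd_mul_seqTheta_eq_zero {s c k : ℕ} (hs : ¬ m ∣ s) (hc : m ∣ c) (hsc : s < c)
    (hk : k ≠ 0) : v c * gapProd m v (s + 1) c * seqTheta m (fun t => v (s + t)) k = 0 := by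
  have hq : ¬ m ∣ s + m * k := fun h => hs ((Nat.dvd_add_left (dvd_mul_right m k)).mp h)
  have hm : m ≠ 0 := by rintro rfl; rw [zero_dvd_iff] at hc; omega
  have hmk : 0 < m * k := Nat.pos_of_ne_zero (mul_ne_zero hm hk)
  rcases lt_or_gt_of_ne (show s + m * k ≠ c by rintro rfl; exact hq hc) with hlt | hgt
  · have h := mul_gapProd_eq_zero (v := v) (a := s + 1) (by omega) hlt hq
    rw [seqTheta]
    linear_combination (v c * gapProd m (fun t => v (s + t)) 0 (m * k)) * h
  · have hcs : ¬ m ∣ c - s := fun h =>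
      hs (by simpa [Nat.sub_sub_self hsc.le] using Nat.dvd_sub hc h)
    have h := mul_gapProd_eq_zero (v := fun t => v (s + t)) (a := 0) (c := m * k) (Nat.zero_le _)
      (by omega) hcs
    simp only [Nat.add_sub_cancel' hsc.le] at h
    rw [seqTheta]
    linear_combination (gapProd m v (s + 1) c * v (s + m * k)) * h

end Sequence

section Composition

variable {m : ℕ} {v : ℕ → ZMod 2} {S : Finset ℕ} {b : ℕ → ZMod 2}

lemma ite_mul_gapProd_succ (hS : ∀ k ∈ S, k ≠ 0) {s c : ℕ} (hsc : s < c) (hc : m ∣ c) :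
    (if m ∣ s then 1 else v s + ∑ k ∈ S, b k * seqTheta m (fun t => v (s + t)) k + 1) *
      (v c * gapProd m v (s + 1) c) = v c * gapProd m v s c := by
  rw [gapProd_eq_mul hsc]
  split_ifs with hs
  · ring
  · have hvanish : (∑ k ∈ S, b k * seqTheta m (fun t => v (s + t)) k) *
        (v c * gapProd m v (s + 1) c) = 0 := by
      rw [sum_mul]
      refine sum_eq_zero fun k hk => ?_
      linear_combination b k * mul_gapProd_mul_seqTheta_eq_zero hs hc hsc (hS k hk)
    linear_combination hvanish

lemma seqTheta_comp_of_ne_zero (hS : ∀ k ∈ S, k ≠ 0) (j : ℕ) :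
    seqTheta m (fun s => v s + ∑ k ∈ S, b k * seqTheta m (fun t => v (s + t)) k) j =
      seqTheta m v j + ∑ k ∈ S, b k * seqTheta m v (k + j) := by
  set w := fun s => v s + ∑ k ∈ S, b k * seqTheta m (fun t => v (s + t)) k
  have hdvd : ∀ k, m ∣ m * j + m * k := fun k => (dvd_mul_right m j).add (dvd_mul_right m k)
  -- downward induction on the start `s` of the product; the correction that `w` adds to each
  -- factor is killed by `mul_gapProd_mul_seqTheta_eq_zero`
  have hpeel : ∀ s (hs : s ≤ m * j), w (m * j) * gapProd m w s (m * j) =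
      v (m * j) * gapProd m v s (m * j) +
        ∑ k ∈ S, b k * (v (m * j + m * k) * gapProd m v s (m * j + m * k)) := by
    intro s hs
    induction hs using Nat.decreasingInduction with
    | self =>
      rw [gapProd_self, gapProd_self, mul_one, mul_one]
      refine congrArg (v (m * j) + ·) ?_
      exact sum_congr rfl fun k _ => by rw [seqTheta_shift (dvd_mul_right m j)]
    | of_succ s hs ih =>
      rw [gapProd_eq_mul hs, mul_left_comm, ih, mul_add, mul_sum,
        ite_mul_gapProd_succ hS hs (dvd_mul_right m j)]
      congr 1
      exact sum_congr rfl fun k _ => by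
        rw [mul_left_comm, ite_mul_gapProd_succ hS (by omega) (hdvd k)]
  rw [seqTheta, hpeel 0 (Nat.zero_le _), seqTheta]
  congr 1
  exact sum_congr rfl fun k _ => by rw [seqTheta, Nat.mul_add, add_comm (m * k)]

lemma seqTheta_comp (h0 : 0 ∈ S) (hb : b 0 = 1) (j : ℕ) :
    seqTheta m (fun s => ∑ k ∈ S, b k * seqTheta m (fun t => v (s + t)) k) j =
      ∑ k ∈ S, b k * seqTheta m v (k + j) := by
  simp only [← add_sum_erase S _ h0, hb, one_mul, seqTheta_zero, add_zero, zero_add]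
  exact seqTheta_comp_of_ne_zero (fun k hk => ne_of_mem_erase hk) j

end Composition

variable {n m : ℕ}

lemma idx_zero (i : Fin n) : idx i 0 = i :=
  Fin.ext (Nat.mod_eq_of_lt i.isLt)

lemma idx_idx (i : Fin n) (s t : ℕ) : idx (idx i s) t = idx i (s + t) :=
  Fin.ext (by simp only [idx, Nat.mod_add_mod, Nat.add_assoc])

lemma theta_zero : theta n m 0 = id := if_pos rfl

lemma theta_apply (k : ℕ) (x : Fin n → ZMod 2) (i : Fin n) :
    theta n m k x i = seqTheta m (fun t => x (idx i t)) k := by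
  rcases eq_or_ne k 0 with rfl | hk
  · rw [theta_zero, seqTheta_zero, idx_zero, id]
  · rw [theta, if_neg hk, seqTheta, gapProd_succ_of_dvd _ (dvd_zero m), gapProd, prod_filter]
    simp only [ite_not]

/-- The map `Ψ : ∑ c_k z^k ↦ ∑ c_k θ_{m,k}`. -/
noncomputable def thetaPoly (n m : ℕ) :
    (ZMod 2)[X] →ₗ[ZMod 2] (Fin n → ZMod 2) → Fin n → ZMod 2 :=
  lsum fun k => LinearMap.toSpanSingleton (ZMod 2) _ (theta n m k)

lemma thetaPoly_monomial (k : ℕ) (c : ZMod 2) :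
    thetaPoly n m (monomial k c) = c • theta n m k := by
  rw [thetaPoly, lsum_apply, sum_monomial_index _ _ (by simp), LinearMap.toSpanSingleton_apply]

lemma thetaPoly_apply (q : (ZMod 2)[X]) (x : Fin n → ZMod 2) (i : Fin n) :
    thetaPoly n m q x i = ∑ k ∈ q.support, q.coeff k * theta n m k x i := by
  simp only [thetaPoly, lsum_apply, Polynomial.sum_def, LinearMap.toSpanSingleton_apply,
    Finset.sum_apply, Pi.smul_apply, smul_eq_mul]

lemma thetaPoly_X_pow_mul (j : ℕ) (q : (ZMod 2)[X]) :
    thetaPoly n m (X ^ j * q) = ∑ k ∈ q.support, q.coeff k • theta n m (k + j) := by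
  conv_lhs => rw [q.as_sum_support, mul_sum]
  simp only [X_pow_mul_monomial, map_sum, thetaPoly_monomial]

lemma theta_comp_thetaPoly {q : (ZMod 2)[X]} (hq : q.coeff 0 = 1) (j : ℕ) :
    theta n m j ∘ thetaPoly n m q = thetaPoly n m (X ^ j * q) := by
  funext x i
  have h0 : 0 ∈ q.support := by simp [hq]
  rw [Function.comp_apply, thetaPoly_X_pow_mul, theta_apply]
  simp only [thetaPoly_apply, Finset.sum_apply, Pi.smul_apply, smul_eq_mul, theta_apply, idx_idx]
  exact seqTheta_comp (v := fun t => x (idx i t)) h0 hq j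

lemma thetaPoly_mul {q : (ZMod 2)[X]} (hq : q.coeff 0 = 1) (p : (ZMod 2)[X]) :
    thetaPoly n m (p * q) = thetaPoly n m p ∘ thetaPoly n m q := by
  induction p using Polynomial.induction_on' with
  | add p₁ p₂ h₁ h₂ => rw [add_mul, map_add, map_add, h₁, h₂]; rfl
  | monomial j c =>
    rw [thetaPoly_monomial, ← C_mul_X_pow_eq_monomial, mul_assoc, ← smul_eq_C_mul, map_smul,
      ← theta_comp_thetaPoly hq]
    rfl

section Truncation

variable {R : Type*} [CommRing R] {N : ℕ}

lemma mk_eq_mk_iff_coeff {p q : R[X]} :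
    Ideal.Quotient.mk (Ideal.span {X ^ N}) p = Ideal.Quotient.mk (Ideal.span {X ^ N}) q ↔
      ∀ d < N, p.coeff d = q.coeff d := by
  simp only [Ideal.Quotient.eq, Ideal.mem_span_singleton, X_pow_dvd_iff, coeff_sub, sub_eq_zero]

lemma isUnit_mk_iff (hN : N ≠ 0) {q : R[X]} :
    IsUnit (Ideal.Quotient.mk (Ideal.span {X ^ N}) q) ↔ IsUnit (q.coeff 0) := by
  constructor
  · intro h
    let ev := Ideal.Quotient.lift (Ideal.span {(X : R[X]) ^ N}) constantCoeff fun a ha => by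
      obtain ⟨r, rfl⟩ := Ideal.mem_span_singleton.mp ha
      simp [hN.symm]
    simpa [ev] using h.map ev
  · intro h
    have hnil : IsNilpotent (Ideal.Quotient.mk (Ideal.span {X ^ N}) (q - C (q.coeff 0))) := by
      refine ⟨N, ?_⟩
      rw [← map_pow, Ideal.Quotient.eq_zero_iff_mem, Ideal.mem_span_singleton]
      exact pow_dvd_pow_of_dvd X_dvd_sub_C N
    have hunit := h.map ((Ideal.Quotient.mk (Ideal.span {X ^ N})).comp C)
    simpa using hnil.isUnit_add_left_of_commute hunit (Commute.all _ _)

end Truncation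

lemma isUnit_zmod_two_iff (c : ZMod 2) : IsUnit c ↔ c = 1 := by
  rw [isUnit_iff_ne_zero]
  revert c
  decide

lemma theta_eq_zero (hm : m ≠ 0) (hmn : ¬ m ∣ n) {k : ℕ} (hk : n / m < k) : theta n m k = 0 := by
  funext x i
  have hn : 0 < n := Nat.pos_of_ne_zero fun h => hmn (h ▸ dvd_zero m)
  have hnk : n < m * k := by
    rw [mul_comm]; exact (Nat.div_lt_iff_lt_mul (Nat.pos_of_ne_zero hm)).mp hk
  have hp : ¬ m ∣ m * k - n := fun h => hmn (by
    simpa [Nat.sub_sub_self hnk.le] using Nat.dvd_sub (dvd_mul_right m k) h)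
  -- coordinates are periodic mod `n`, so `x_{i+mk}` recurs inside the run at offset `mk - n`
  have hper : idx i (m * k) = idx i (m * k - n) :=
    Fin.ext (by simp only [idx, ← Nat.add_mod_right (i + (m * k - n)), Nat.add_assoc,
      Nat.sub_add_cancel hnk.le])
  rw [theta_apply, seqTheta, hper]
  exact mul_gapProd_eq_zero (v := fun t => x (idx i t)) (Nat.zero_le _) (by omega) hp

lemma theta_apply_indicator (hm : m ≠ 0) (hmn : ¬ m ∣ n) (hn : 0 < n) {d : ℕ} (hd : d ≤ n / m)
    (k : ℕ) : theta n m k (fun t => if (t : ℕ) = m * d then 1 else 0) ⟨0, hn⟩ =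
      if k = d then 1 else 0 := by
  rcases lt_or_ge (n / m) k with hk | hk
  · rw [theta_eq_zero hm hmn hk, if_neg (by omega)]
    rfl
  have hmk : m * k < n := (Nat.mul_le_mul_left m hk).trans_lt (Nat.mul_div_lt_iff_not_dvd.mpr hmn)
  have hval : ∀ t < n, (idx (⟨0, hn⟩ : Fin n) t : ℕ) = t := fun t ht => by
    simp [idx, Nat.mod_eq_of_lt ht]
  have hgap : gapProd m (fun t => if (idx (⟨0, hn⟩ : Fin n) t : ℕ) = m * d then 1 else 0) 0 (m * k)
      = 1 := by
    refine prod_eq_one fun t ht => ?_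
    simp only [hval t (by simp at ht; omega)]
    split_ifs with h1 h2 <;> first | rfl | exact absurd (h2 ▸ dvd_mul_right m d) h1
  rw [theta_apply, seqTheta, hgap, mul_one, hval _ hmk]
  simp only [mul_right_inj' hm]

lemma thetaPoly_apply_indicator (hm : m ≠ 0) (hmn : ¬ m ∣ n) (hn : 0 < n) {d : ℕ}
    (hd : d ≤ n / m) (q : (ZMod 2)[X]) :
    thetaPoly n m q (fun t => if (t : ℕ) = m * d then 1 else 0) ⟨0, hn⟩ = q.coeff d := by
  simp only [thetaPoly_apply, theta_apply_indicator hm hmn hn hd, mul_ite, mul_one, mul_zero,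
    sum_ite_eq', mem_support_iff, ne_eq, ite_not]
  split_ifs with h
  · exact h.symm
  · rfl

lemma thetaPoly_eq_iff (hm : m ≠ 0) (hmn : ¬ m ∣ n) {p q : (ZMod 2)[X]} :
    thetaPoly n m p = thetaPoly n m q ↔
      Ideal.Quotient.mk (Ideal.span {X ^ (n / m + 1)}) p =
        Ideal.Quotient.mk (Ideal.span {X ^ (n / m + 1)}) q := by
  rw [mk_eq_mk_iff_coeff]
  constructor
  · intro h d hd
    have hn : 0 < n := Nat.pos_of_ne_zero fun h => hmn (h ▸ dvd_zero m)
    have h := congrFun (congrFun h fun t => if (t : ℕ) = m * d then 1 else 0) ⟨0, hn⟩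
    rwa [thetaPoly_apply_indicator hm hmn hn (by omega),
      thetaPoly_apply_indicator hm hmn hn (by omega)] at h
  · intro h
    obtain ⟨r, hr⟩ : X ^ (n / m + 1) ∣ p - q :=
      X_pow_dvd_iff.mpr fun d hd => by rw [coeff_sub, h d hd, sub_self]
    rw [← sub_eq_zero, ← map_sub, hr, thetaPoly_X_pow_mul]
    exact sum_eq_zero fun k _ => by rw [theta_eq_zero hm hmn (by omega), smul_zero]

lemma thetaPoly_one : thetaPoly n m 1 = id := by
  rw [← monomial_zero_one, thetaPoly_monomial, one_smul, theta_zero]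

lemma coeff_one_add_sum_C_mul_X_pow (l : ℕ) (a : ℕ → ZMod 2) (d : ℕ) :
    (1 + ∑ k ∈ Icc 1 l, C (a k) * X ^ k).coeff d =
      if d = 0 then 1 else if d ≤ l then a d else 0 := by
  rw [coeff_add, coeff_one, finsetSum_coeff]
  simp only [coeff_C_mul_X_pow, sum_ite_eq, mem_Icc]
  split_ifs <;> first | omega | simp_all

lemma thetaPoly_one_add_sum_C_mul_X_pow (a : ℕ → ZMod 2) :
    thetaPoly n m (1 + ∑ k ∈ Icc 1 (n / m), C (a k) * X ^ k) =
      theta n m 0 + ∑ k ∈ Icc 1 (n / m), a k • theta n m k := by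
  simp only [map_add, thetaPoly_one, theta_zero, map_sum, C_mul_X_pow_eq_monomial,
    thetaPoly_monomial]

lemma Gset_eq (hm : m ≠ 0) (hmn : ¬ m ∣ n) :
    Gset n m = thetaPoly n m '' {q | q.coeff 0 = 1} := by
  ext F
  constructor
  · rintro ⟨a, rfl⟩
    exact ⟨_, by simp, thetaPoly_one_add_sum_C_mul_X_pow a⟩
  · rintro ⟨q, hq, rfl⟩
    refine ⟨q.coeff, ?_⟩
    rw [← thetaPoly_one_add_sum_C_mul_X_pow, thetaPoly_eq_iff hm hmn, mk_eq_mk_iff_coeff]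
    intro d hd
    rw [coeff_one_add_sum_C_mul_X_pow]
    split_ifs with h0
    · rw [h0, hq]
    · rfl
    · omega

lemma setOf_isUnit_eq (N : ℕ) :
    {u : (ZMod 2)[X] ⧸ Ideal.span {(X : (ZMod 2)[X]) ^ (N + 1)} | IsUnit u} =
      Ideal.Quotient.mk _ '' {q | q.coeff 0 = 1} := by
  ext u
  obtain ⟨q, rfl⟩ := Ideal.Quotient.mk_surjective u
  simp only [Set.mem_ofPred_eq, Set.mem_image, isUnit_mk_iff N.succ_ne_zero,
    isUnit_zmod_two_iff]
  exact ⟨fun h => ⟨q, h, rfl⟩,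
    fun ⟨p, hp, hpq⟩ => hp ▸ (mk_eq_mk_iff_coeff.mp hpq 0 N.succ_pos).symm⟩

lemma exists_mk_mul_eq_one (N : ℕ) {p : (ZMod 2)[X]} (hp : p.coeff 0 = 1) :
    ∃ q : (ZMod 2)[X], q.coeff 0 = 1 ∧
      Ideal.Quotient.mk (Ideal.span {(X : (ZMod 2)[X]) ^ (N + 1)}) (p * q) = 1 := by
  have hu : IsUnit (Ideal.Quotient.mk (Ideal.span {X ^ (N + 1)}) p) :=
    (isUnit_mk_iff N.succ_ne_zero).mpr (hp ▸ isUnit_one)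
  obtain ⟨q, hq⟩ := Ideal.Quotient.mk_surjective hu.unit⁻¹.val
  refine ⟨q, ?_, by rw [map_mul, hq, hu.mul_val_inv]⟩
  rw [← isUnit_zmod_two_iff, ← isUnit_mk_iff N.succ_ne_zero, hq]
  exact Units.isUnit _

noncomputable def toQuot (n m : ℕ) (F : (Fin n → ZMod 2) → Fin n → ZMod 2) :
    (ZMod 2)[X] ⧸ Ideal.span {(X : (ZMod 2)[X]) ^ (n / m + 1)} :=
  Ideal.Quotient.mk _ (Function.invFun (thetaPoly n m) F)

lemma toQuot_thetaPoly (hm : m ≠ 0) (hmn : ¬ m ∣ n) (p : (ZMod 2)[X]) :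
    toQuot n m (thetaPoly n m p) = Ideal.Quotient.mk _ p :=
  (thetaPoly_eq_iff hm hmn).mp (Function.invFun_eq ⟨p, rfl⟩)

lemma bijOn_toQuot (hm : m ≠ 0) (hmn : ¬ m ∣ n) (s : Set (ZMod 2)[X]) :
    Set.BijOn (toQuot n m) (thetaPoly n m '' s)
      (Ideal.Quotient.mk (Ideal.span {(X : (ZMod 2)[X]) ^ (n / m + 1)}) '' s) := by
  have hinj : Set.InjOn (toQuot n m) (thetaPoly n m '' s) := by
    rintro _ ⟨p, -, rfl⟩ _ ⟨q, -, rfl⟩ hpq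
    rw [toQuot_thetaPoly hm hmn, toQuot_thetaPoly hm hmn] at hpq
    exact (thetaPoly_eq_iff hm hmn).mpr hpq
  convert hinj.bijOn_image using 1
  simp only [Set.image_image, toQuot_thetaPoly hm hmn]

end ThetaGroup

open Finset Polynomial ThetaGroup

theorem stmt8_general (n m : ℕ) (hm : 2 ≤ m) (hmn : ¬ m ∣ n) :
    (∀ f ∈ Gset n m, ∀ g ∈ Gset n m, f ∘ g ∈ Gset n m ∧ f ∘ g = g ∘ f) ∧
    (id ∈ Gset n m) ∧
    (∀ f ∈ Gset n m, ∃ g ∈ Gset n m, f ∘ g = id ∧ g ∘ f = id) ∧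
    ∃ φ : ((Fin n → ZMod 2) → Fin n → ZMod 2) →
        Polynomial (ZMod 2) ⧸
          Ideal.span {(Polynomial.X : Polynomial (ZMod 2)) ^ (n / m + 1)},
      (∀ a : ℕ → ZMod 2,
        φ (theta n m 0 + ∑ k ∈ Finset.Icc 1 (n / m), a k • theta n m k) =
          Ideal.Quotient.mk
            (Ideal.span {(Polynomial.X : Polynomial (ZMod 2)) ^ (n / m + 1)})
            (1 + ∑ k ∈ Finset.Icc 1 (n / m),
              Polynomial.C (a k) * Polynomial.X ^ k)) ∧
      (∀ f ∈ Gset n m, ∀ g ∈ Gset n m, φ (f ∘ g) = φ f * φ g) ∧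
      Set.BijOn φ (Gset n m) {u | IsUnit u} := by
  have hm0 : m ≠ 0 := by omega
  have hcomp : ∀ {p q : (ZMod 2)[X]}, q.coeff 0 = 1 →
      thetaPoly n m p ∘ thetaPoly n m q = thetaPoly n m (p * q) :=
    fun hq => (thetaPoly_mul hq _).symm
  rw [Gset_eq hm0 hmn, setOf_isUnit_eq]
  refine ⟨?_, ⟨1, coeff_one_zero, thetaPoly_one⟩, ?_, toQuot n m, fun a => ?_, ?_,
    bijOn_toQuot hm0 hmn _⟩
  · rintro _ ⟨p, hp, rfl⟩ _ ⟨q, hq, rfl⟩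
    rw [hcomp hq, hcomp hp, mul_comm q]
    exact ⟨⟨p * q, by rw [Set.mem_ofPred_eq, mul_coeff_zero, hp, hq, one_mul], rfl⟩, rfl⟩
  · rintro _ ⟨p, hp, rfl⟩
    obtain ⟨q, hq, hpq⟩ := exists_mk_mul_eq_one (n / m) hp
    have hid : thetaPoly n m (p * q) = id := by
      rw [← thetaPoly_one, thetaPoly_eq_iff hm0 hmn, hpq, map_one]
    exact ⟨_, ⟨q, hq, rfl⟩, by rw [hcomp hq, hid], by rw [hcomp hp, mul_comm, hid]⟩
  · rw [← thetaPoly_one_add_sum_C_mul_X_pow, toQuot_thetaPoly hm0 hmn]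
  · rintro _ ⟨p, hp, rfl⟩ _ ⟨q, hq, rfl⟩
    rw [hcomp hq, toQuot_thetaPoly hm0 hmn, toQuot_thetaPoly hm0 hmn, toQuot_thetaPoly hm0 hmn,
      map_mul]

theorem stmt8 (n m : ℕ) (hn : 1 ≤ n) (hm : 2 ≤ m) (hmn : ¬ m ∣ n) :
    (∀ f ∈ Gset n m, ∀ g ∈ Gset n m, f ∘ g ∈ Gset n m ∧ f ∘ g = g ∘ f) ∧
    (id ∈ Gset n m) ∧
    (∀ f ∈ Gset n m, ∃ g ∈ Gset n m, f ∘ g = id ∧ g ∘ f = id) ∧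
    ∃ φ : ((Fin n → ZMod 2) → Fin n → ZMod 2) →
        Polynomial (ZMod 2) ⧸
          Ideal.span {(Polynomial.X : Polynomial (ZMod 2)) ^ (n / m + 1)},
      (∀ a : ℕ → ZMod 2,
        φ (theta n m 0 + ∑ k ∈ Finset.Icc 1 (n / m), a k • theta n m k) =
          Ideal.Quotient.mk
            (Ideal.span {(Polynomial.X : Polynomial (ZMod 2)) ^ (n / m + 1)})
            (1 + ∑ k ∈ Finset.Icc 1 (n / m),
              Polynomial.C (a k) * Polynomial.X ^ k)) ∧
      (∀ f ∈ Gset n m, ∀ g ∈ Gset n m, φ (f ∘ g) = φ f * φ g) ∧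
      Set.BijOn φ (Gset n m) {u | IsUnit u} :=
  stmt8_general n m hm hmn
end

section
/- Let ℓ ≥ 1, let 1 ≤ j ≤ ℓ, let a_{j+1}, …, a_ℓ ∈ F_2, and let f = 1 + z^j + Σ_{i=j+1}^{ℓ} a_i z^i ∈ F_2[z] (so z^j is the non-constant term of lowest degree in f). Then the order of the unit [f] in the unit group (F_2[z]/(z^{ℓ+1}))^* equals 2^r, where r is the least nonnegative integer with 2^r · j ≥ ℓ + 1 (equivalently, r = ⌈log_2((ℓ+1)/j)⌉). -/
/-!
Write `f = 1 + X ^ j * u` with `u(0) = 1`. In characteristic `p` the Frobenius gives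
`f ^ p ^ m = 1 + X ^ (j * p ^ m) * u ^ p ^ m`, and `u ^ p ^ m` still has constant term `1`, so
`f ^ p ^ m ≡ 1 mod X ^ n` exactly when `n ≤ j * p ^ m`. As the order divides the first such
`p`-power, it is that power.
-/

open Polynomial

theorem orderOf_eq_prime_pow_of_forall_pow_eq_one_iff {G : Type*} [Monoid G] {x : G} {p r : ℕ}
    (hp : p.Prime) (h : ∀ m, x ^ p ^ m = 1 ↔ r ≤ m) : orderOf x = p ^ r := by
  obtain ⟨k, hkr, hk⟩ :=
    (Nat.dvd_prime_pow hp).1 (orderOf_dvd_of_pow_eq_one ((h r).2 le_rfl))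
  rw [hk, le_antisymm hkr ((h k).1 (hk ▸ pow_orderOf_eq_one x))]

namespace Polynomial

variable {R : Type*} [CommRing R]

theorem X_pow_dvd_X_pow_mul_iff {u : R[X]} (hu : u.coeff 0 ≠ 0) {n k : ℕ} :
    X ^ n ∣ X ^ k * u ↔ n ≤ k := by
  refine ⟨fun h => ?_, fun h => dvd_mul_of_dvd_left (pow_dvd_pow X h) u⟩
  by_contra! hkn
  have hcoeff := X_pow_dvd_iff.1 h k hkn
  rw [coeff_X_pow_mul', if_pos le_rfl, Nat.sub_self] at hcoeff
  exact hu hcoeff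

theorem mk_span_X_pow_eq_one_iff {n : ℕ} {f : R[X]} :
    Ideal.Quotient.mk (Ideal.span {X ^ n}) f = 1 ↔ X ^ n ∣ f - 1 := by
  rw [← map_one (Ideal.Quotient.mk _), Ideal.Quotient.eq, Ideal.mem_span_singleton]

theorem orderOf_mk_one_add_X_pow_mul {p : ℕ} [hp : Fact p.Prime] [CharP R p] {u : R[X]}
    (hu : u.coeff 0 = 1) {n j r : ℕ} (hr : n ≤ p ^ r * j) (hr' : ∀ r' < r, p ^ r' * j < n) :
    orderOf (Ideal.Quotient.mk (Ideal.span {X ^ n}) (1 + X ^ j * u)) = p ^ r := by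
  have : Nontrivial R := CharP.nontrivial_of_char_ne_one hp.out.ne_one
  refine orderOf_eq_prime_pow_of_forall_pow_eq_one_iff hp.out fun m => ?_
  have hu_pow : (u ^ p ^ m).coeff 0 ≠ 0 := by
    rw [coeff_zero_eq_eval_zero, eval_pow, ← coeff_zero_eq_eval_zero, hu, one_pow]
    exact one_ne_zero
  rw [← map_pow, mk_span_X_pow_eq_one_iff, add_pow_char_pow, one_pow, add_sub_cancel_left,
    mul_pow, ← pow_mul, X_pow_dvd_X_pow_mul_iff hu_pow, mul_comm j]
  refine ⟨fun hm => ?_, fun hm => hr.trans ?_⟩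
  · by_contra! hmr
    exact (hr' m hmr).not_ge hm
  · exact Nat.mul_le_mul_right j (Nat.pow_le_pow_right hp.out.pos hm)

end Polynomial

theorem stmt11_general (ℓ j : ℕ)
    (a : ℕ → ZMod 2) (r : ℕ)
    (hr : ℓ + 1 ≤ 2 ^ r * j) (hr' : ∀ r' : ℕ, r' < r → 2 ^ r' * j < ℓ + 1) :
    orderOf (Ideal.Quotient.mk
        (Ideal.span {(Polynomial.X : Polynomial (ZMod 2)) ^ (ℓ + 1)})
        (1 + Polynomial.X ^ j +
          ∑ i ∈ Finset.Icc (j + 1) ℓ, Polynomial.C (a i) * Polynomial.X ^ i)) = 2 ^ r := by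
  have : Fact (Nat.Prime 2) := ⟨Nat.prime_two⟩
  set u : (ZMod 2)[X] := 1 + ∑ i ∈ Finset.Icc (j + 1) ℓ, C (a i) * X ^ (i - j)
  have hfactor : 1 + X ^ j + ∑ i ∈ Finset.Icc (j + 1) ℓ, C (a i) * X ^ i = 1 + X ^ j * u := by
    rw [mul_add, mul_one, Finset.mul_sum, add_assoc]
    congr 2
    refine Finset.sum_congr rfl fun i hi => ?_
    rw [mul_left_comm, ← pow_add, Nat.add_sub_cancel' (by grind)]
  have hu : u.coeff 0 = 1 := by
    have hvanish : ∀ i ∈ Finset.Icc (j + 1) ℓ, (C (a i) * X ^ (i - j)).coeff 0 = 0 := by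
      intro i hi
      rw [coeff_C_mul_X_pow, if_neg (by grind)]
    rw [coeff_add, coeff_one_zero, finsetSum_coeff, Finset.sum_eq_zero hvanish, add_zero]
  rw [hfactor]
  exact orderOf_mk_one_add_X_pow_mul hu hr hr'

theorem stmt11 (ℓ j : ℕ) (hℓ : 1 ≤ ℓ) (hj1 : 1 ≤ j) (hj2 : j ≤ ℓ)
    (a : ℕ → ZMod 2) (r : ℕ)
    (hr : ℓ + 1 ≤ 2 ^ r * j) (hr' : ∀ r' : ℕ, r' < r → 2 ^ r' * j < ℓ + 1) :
    orderOf (Ideal.Quotient.mk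
        (Ideal.span {(Polynomial.X : Polynomial (ZMod 2)) ^ (ℓ + 1)})
        (1 + Polynomial.X ^ j +
          ∑ i ∈ Finset.Icc (j + 1) ℓ, Polynomial.C (a i) * Polynomial.X ^ i)) = 2 ^ r :=
  stmt11_general ℓ j a r hr hr'
end

section
/- Let 1 ≤ k ≤ ℓ and let f = θ_{m,0} + θ_{m,k}. Then the order of f under composition equals 2^r, where r is the least nonnegative integer with 2^r · k ≥ ℓ + 1 (equivalently, r = ⌈log_2((ℓ+1)/k)⌉): the 2^r-fold iterate of f is the identity map of F_2^n, while for r ≥ 1 the 2^{r−1}-fold iterate of f is not the identity map. -/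
def thetaOffsets (m K : ℕ) : Finset ℕ := (Finset.Ico 1 (m * K)).filter (fun j => ¬ m ∣ j)

def thetaAt (m K : ℕ) (c : ℕ → ZMod 2) : ZMod 2 := c (m * K) * ∏ j ∈ thetaOffsets m K, (c j + 1)

lemma theta_zero (n m : ℕ) : theta n m 0 = id := rfl

lemma theta_apply {n m K : ℕ} (hK : K ≠ 0) (x : Fin n → ZMod 2) (i : Fin n) :
    theta n m K x i = thetaAt m K (fun j => x (idx i j)) := by
  simp only [theta, if_neg hK, thetaAt, thetaOffsets]

lemma idx_idx {n : ℕ} (i : Fin n) (a b : ℕ) : idx (idx i a) b = idx i (a + b) := by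
  ext
  simp only [idx, Nat.mod_add_mod, Nat.add_assoc]

lemma sub_mem_thetaOffsets {m K j : ℕ} (hj : j ∈ thetaOffsets m K) :
    m * K - j ∈ thetaOffsets m K := by
  simp only [thetaOffsets, Finset.mem_filter, Finset.mem_Ico] at hj ⊢
  refine ⟨by omega, fun hd => hj.2 ?_⟩
  simpa [Nat.sub_sub_self hj.1.2.le] using Nat.dvd_sub (dvd_mul_right m K) hd

lemma thetaOffsets_two_mul (m K : ℕ) :
    thetaOffsets m (2 * K) =
      thetaOffsets m K ∪ (thetaOffsets m K).map (addLeftEmbedding (m * K)) := by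
  ext j
  simp only [thetaOffsets, Finset.mem_union, Finset.mem_map, Finset.mem_filter, Finset.mem_Ico,
    addLeftEmbedding_apply]
  constructor
  · rintro ⟨⟨hj1, hj2⟩, hj⟩
    by_cases hjK : j < m * K
    · exact Or.inl ⟨⟨hj1, hjK⟩, hj⟩
    · have hne : j ≠ m * K := by rintro rfl; exact hj (dvd_mul_right m K)
      refine Or.inr ⟨j - m * K,
        ⟨⟨by omega, by rw [two_mul, mul_add] at hj2; omega⟩, fun hd => hj ?_⟩, by omega⟩
      simpa [Nat.add_sub_cancel' (not_lt.mp hjK)] using Nat.dvd_add (dvd_mul_right m K) hd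
  · rintro (⟨⟨hj1, hj2⟩, hj⟩ | ⟨j', ⟨⟨hj1, hj2⟩, hj'⟩, rfl⟩)
    · exact ⟨⟨hj1, by rw [two_mul, mul_add]; omega⟩, hj⟩
    · exact ⟨⟨by omega, by rw [two_mul, mul_add]; omega⟩,
        fun hd => hj' ((Nat.dvd_add_right (dvd_mul_right m K)).mp hd)⟩

lemma prod_thetaOffsets_two_mul (m K : ℕ) (g : ℕ → ZMod 2) :
    ∏ j ∈ thetaOffsets m (2 * K), g j =
      (∏ j ∈ thetaOffsets m K, g j) * ∏ j ∈ thetaOffsets m K, g (m * K + j) := by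
  rw [thetaOffsets_two_mul, Finset.prod_union, Finset.prod_map]
  · rfl
  · rw [Finset.disjoint_left]
    intro j hj hj'
    simp only [thetaOffsets, Finset.mem_map, Finset.mem_filter, Finset.mem_Ico,
      addLeftEmbedding_apply] at hj hj'
    omega

lemma thetaAt_eq_zero_of_mem {m K j : ℕ} {c : ℕ → ZMod 2} (hj : j ∈ thetaOffsets m K)
    (hc : c j = c (m * K)) : thetaAt m K c = 0 := by
  have zmod_two_mul_add_one : ∀ a : ZMod 2, a * (a + 1) = 0 := by decide
  rw [thetaAt, ← Finset.mul_prod_erase _ _ hj, hc, ← mul_assoc, zmod_two_mul_add_one, zero_mul]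

lemma thetaAt_shift_ne_zero {m K j : ℕ} {c : ℕ → ZMod 2} (hj : j ∈ thetaOffsets m K)
    (h : thetaAt m K (fun s => c (j + s)) ≠ 0) :
    c (m * K) = 0 ∧ thetaAt m K (fun s => c (m * K + s)) = 0 := by
  have zmod_two_eq_zero : ∀ a : ZMod 2, a + 1 ≠ 0 → a = 0 := by decide
  have zmod_two_eq_one : ∀ a : ZMod 2, a ≠ 0 → a + 1 = 0 := by decide
  rw [thetaAt, mul_ne_zero_iff, Finset.prod_ne_zero_iff] at h
  constructor
  · have := zmod_two_eq_zero _ (h.2 _ (sub_mem_thetaOffsets hj))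
    rwa [Nat.add_sub_cancel' (Finset.mem_Ico.mp (Finset.mem_filter.mp hj).1).2.le] at this
  · refine mul_eq_zero_of_right _ (Finset.prod_eq_zero hj ?_)
    show c (m * K + j) + 1 = 0
    rw [Nat.add_comm (m * K) j]
    exact zmod_two_eq_one _ h.1

lemma thetaAt_add_thetaAt (m K : ℕ) (c : ℕ → ZMod 2) :
    thetaAt m K (fun t => c t + thetaAt m K (fun s => c (t + s))) =
      thetaAt m K c + thetaAt m (2 * K) c := by
  set y : ℕ → ZMod 2 := fun t => c t + thetaAt m K (fun s => c (t + s)) with hy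
  have hrhs : thetaAt m K c + thetaAt m (2 * K) c =
      y (m * K) * ∏ j ∈ thetaOffsets m K, (c j + 1) := by
    simp only [hy, thetaAt]
    rw [prod_thetaOffsets_two_mul, show m * (2 * K) = m * K + m * K by ring]
    ring
  rw [hrhs, thetaAt]
  by_cases hyK : y (m * K) = 0
  · rw [hyK, zero_mul, zero_mul]
  refine congrArg _ (Finset.prod_congr rfl fun j hj => ?_)
  have hj0 : thetaAt m K (fun s => c (j + s)) = 0 := by
    by_contra h
    obtain ⟨h1, h2⟩ := thetaAt_shift_ne_zero hj h
    exact hyK (by simp only [hy, h1, h2, add_zero])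
  simp only [hy, hj0, add_zero]

lemma theta_add_theta {n m K : ℕ} (hK : K ≠ 0) (x : Fin n → ZMod 2) :
    theta n m K (x + theta n m K x) = theta n m K x + theta n m (2 * K) x := by
  funext i
  rw [Pi.add_apply, theta_apply hK, theta_apply hK, theta_apply (by omega),
    ← thetaAt_add_thetaAt]
  congr 1
  funext t
  rw [Pi.add_apply, theta_apply hK]
  simp only [idx_idx]

lemma theta_zero_add_theta_iterate_two {n m K : ℕ} (hK : K ≠ 0) :
    (theta n m 0 + theta n m K)^[2] = theta n m 0 + theta n m (2 * K) := by
  funext x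
  simp only [Function.iterate_succ, Function.iterate_zero, Function.comp_apply, id, Pi.add_apply,
    theta_zero, theta_add_theta hK]
  funext i
  simp only [Pi.add_apply]
  linear_combination CharTwo.add_self_eq_zero (theta n m K x i)

lemma theta_zero_add_theta_iterate_two_pow {n m k : ℕ} (hk : k ≠ 0) (s : ℕ) :
    (theta n m 0 + theta n m k)^[2 ^ s] = theta n m 0 + theta n m (2 ^ s * k) := by
  induction s with
  | zero => simp
  | succ s ih =>
    rw [pow_succ, Function.iterate_mul, ih,
      theta_zero_add_theta_iterate_two (by positivity)]
    ring_nf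

lemma theta_eq_zero_of_lt_mul {n m K : ℕ} (hmn : ¬ m ∣ n) (h : n < m * K) : theta n m K = 0 := by
  funext x i
  rw [theta_apply (by rintro rfl; simp at h)]
  refine thetaAt_eq_zero_of_mem (j := m * K - n) ?_ ?_
  · simp only [thetaOffsets, Finset.mem_filter, Finset.mem_Ico]
    refine ⟨by have := i.pos; omega, fun hd => hmn ?_⟩
    simpa [Nat.sub_sub_self h.le] using Nat.dvd_sub (dvd_mul_right m K) hd
  · congr 1
    ext
    simp only [idx, ← Nat.add_mod_right (i.val + (m * K - n)), Nat.add_assoc,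
      Nat.sub_add_cancel h.le]

lemma theta_ne_zero_of_mul_lt {n m K : ℕ} (hK : K ≠ 0) (h : m * K < n) : theta n m K ≠ 0 := by
  intro h0
  have hval := congrFun (congrFun h0 (Pi.single ⟨m * K, h⟩ 1)) ⟨0, by omega⟩
  rw [theta_apply hK, thetaAt] at hval
  have hidx (j : ℕ) (hj : j ≤ m * K) :
      idx (⟨0, by omega⟩ : Fin n) j = ⟨j, hj.trans_lt h⟩ := by
    ext
    simp [idx, Nat.mod_eq_of_lt (hj.trans_lt h)]
  rw [hidx _ le_rfl, Finset.prod_eq_one fun j hj => ?_] at hval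
  · simp at hval
  · have hj' := Finset.mem_Ico.mp (Finset.mem_filter.mp hj).1
    rw [hidx _ hj'.2.le, Pi.single_eq_of_ne (by simp; omega), zero_add]

lemma isLeast_iterate_eq_id_two_pow {α : Type*} {f : α → α} {r : ℕ} (hr : f^[2 ^ r] = id)
    (hr' : 1 ≤ r → f^[2 ^ (r - 1)] ≠ id) : IsLeast {d : ℕ | 0 < d ∧ f^[d] = id} (2 ^ r) := by
  let g : Function.End α := f
  have horder : orderOf g = 2 ^ r := by
    cases r with
    | zero => exact orderOf_eq_one_iff.mpr hr
    | succ r => exact orderOf_eq_prime_pow (x := g) (hr' r.succ_pos) hr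
  exact ⟨⟨by positivity, hr⟩, fun d ⟨hd, hfd⟩ => horder ▸ orderOf_le_of_pow_eq_one (x := g) hd hfd⟩

theorem stmt12_general (n m k : ℕ) (hm : 2 ≤ m) (hmn : ¬ m ∣ n)
    (hk1 : 1 ≤ k) (r : ℕ)
    (hr : n / m + 1 ≤ 2 ^ r * k) (hr' : ∀ r' : ℕ, r' < r → 2 ^ r' * k < n / m + 1) :
    ((theta n m 0 + theta n m k)^[2 ^ r] = id) ∧
    (1 ≤ r → (theta n m 0 + theta n m k)^[2 ^ (r - 1)] ≠ id) ∧
    IsLeast {d : ℕ | 0 < d ∧ (theta n m 0 + theta n m k)^[d] = id} (2 ^ r) := by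
  have hk : k ≠ 0 := by omega
  have hperiod : (theta n m 0 + theta n m k)^[2 ^ r] = id := by
    have hlt : n < m * (2 ^ r * k) := by
      rw [mul_comm]
      exact (Nat.div_lt_iff_lt_mul (by omega)).mp hr
    rw [theta_zero_add_theta_iterate_two_pow hk, theta_eq_zero_of_lt_mul hmn hlt, add_zero,
      theta_zero]
  have hnot : 1 ≤ r → (theta n m 0 + theta n m k)^[2 ^ (r - 1)] ≠ id := by
    intro hr1
    have hle : 2 ^ (r - 1) * k ≤ n / m := Nat.lt_succ_iff.mp (hr' (r - 1) (by omega))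
    have hlt : m * (2 ^ (r - 1) * k) < n :=
      (Nat.mul_le_mul_left m hle).trans_lt (Nat.mul_div_lt_iff_not_dvd.mpr hmn)
    rw [theta_zero_add_theta_iterate_two_pow hk, ← theta_zero n m, Ne, add_eq_left]
    exact theta_ne_zero_of_mul_lt (by positivity) hlt
  exact ⟨hperiod, hnot, isLeast_iterate_eq_id_two_pow hperiod hnot⟩

theorem stmt12 (n m k : ℕ) (hn : 1 ≤ n) (hm : 2 ≤ m) (hmn : ¬ m ∣ n)
    (hk1 : 1 ≤ k) (hk2 : k ≤ n / m) (r : ℕ)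
    (hr : n / m + 1 ≤ 2 ^ r * k) (hr' : ∀ r' : ℕ, r' < r → 2 ^ r' * k < n / m + 1) :
    ((theta n m 0 + theta n m k)^[2 ^ r] = id) ∧
    (1 ≤ r → (theta n m 0 + theta n m k)^[2 ^ (r - 1)] ≠ id) ∧
    IsLeast {d : ℕ | 0 < d ∧ (theta n m 0 + theta n m k)^[d] = id} (2 ^ r) :=
  stmt12_general n m k hm hmn hk1 r hr hr'
end
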